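/- Let B be a standard graded artinian k-algebra, let A = B ⊗_k k[x]/(x²), let ℓ̄ ∈ B₁ be a linear form and ℓ = ℓ̄ + x ∈ A₁. Fix integers i, t ≥ 1, assume B_{i+t} ≠ 0 and that t is invertible in k. Then the multiplication map ·ℓ^t : A_i → A_{i+t} has full rank if and only if the maps ·ℓ̄^{t−1} : B_i → B_{i+t−1} and ·ℓ̄^{t+1} : B_{i−1} → B_{i+t} have full rank for the same reason. Moreover, if the matrices M̄_i^{t−1} and M̄_{i−1}^{t+1} representing these two maps are square of sizes n and m respectively, then the matrix M_i^t representing ·ℓ^t is square of size n+m and det(M_i^t) = (−1)^{m(n+1)} · det(M̄_i^{t−1}) · det(M̄_{i−1}^{t+1}) · t^{n−m}. -/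

import Mathlib

/-!
Since `x² = 0`, `(ℓ̄ + x)^t = ℓ̄^t + t·x·ℓ̄^(t-1)`, so under `A_j ≅ B_j ⊕ x·B_{j-1}` multiplication
by `ℓ^t` becomes the block map `(b, b') ↦ (ℓ̄·ℓ̄^(t-1)·b, t·ℓ̄^(t-1)·b + ℓ̄^(t-1)·ℓ̄·b')`.
With `t` invertible, eliminating one block against the other shows that this map is injective
(surjective) exactly when `ℓ̄^(t-1)` and `ℓ̄^(t+1) = ℓ̄·ℓ̄^(t-1)·ℓ̄` both are. On matrices the same
elimination is a unipotent row operation, which leaves a block triangular matrix with diagonal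
blocks `-t⁻¹·M̄^{t+1}` and `t·M̄^{t-1}`; reordering the columns costs the sign `(-1)^{mn}`.
-/

open scoped BigOperators

/-- Multiplication by `a` is injective as a map on the subspace `V`. -/
def MulInjOn {k R : Type*} [Field k] [CommRing R] [Algebra k R]
    (V : Submodule k R) (a : R) : Prop :=
  ∀ v ∈ V, a * v = 0 → v = 0

/-- Multiplication by `a` maps the subspace `V` onto the subspace `W`. -/
def MulSurjOnto {k R : Type*} [Field k] [CommRing R] [Algebra k R]
    (V W : Submodule k R) (a : R) : Prop :=
  ∀ w ∈ W, ∃ v ∈ V, a * v = w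

/-- The multiplication map `·a : V → W` has full rank: it is injective or surjective. -/
def MulFullRank {k R : Type*} [Field k] [CommRing R] [Algebra k R]
    (V W : Submodule k R) (a : R) : Prop :=
  MulInjOn V a ∨ MulSurjOnto V W a

/-- `𝒜` is the grading of a standard graded artinian `k`-algebra structure on `R`:
the components form an internal direct sum, vanish in negative degrees, are
multiplicative, the degree-zero part is spanned by `1`, the algebra is generated in
degree one, and `R` is a finite-dimensional `k`-vector space (equivalently, artinian). -/
structure IsStdGradedArtinian (k : Type*) [Field k] (R : Type*) [CommRing R] [Algebra k R]
    (𝒜 : ℤ → Submodule k R) : Prop where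
  internal : DirectSum.IsInternal 𝒜
  one_mem : (1 : R) ∈ 𝒜 0
  mul_mem : ∀ {i j : ℤ} {a b : R}, a ∈ 𝒜 i → b ∈ 𝒜 j → a * b ∈ 𝒜 (i + j)
  neg_bot : ∀ i : ℤ, i < 0 → 𝒜 i = ⊥
  zero_spanOne : 𝒜 0 = Submodule.span k {(1 : R)}
  succ_eq : ∀ i : ℤ, 0 ≤ i → 𝒜 (i + 1) = 𝒜 1 * 𝒜 i
  finiteDim : FiniteDimensional k R

/-- `A` (graded by `ℬ`) is the extension `B ⊗ₖ k[x]/(x^d)` of `B` (graded by `𝒜`):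
`φ` is the canonical inclusion of `B`, `x` has degree one with `x^d = 0`, and each
graded component decomposes as `ℬ j = ⊕_{q=0}^{d-1} x^q · φ(𝒜 (j - q))`. -/
structure IsCIExtension {k B A : Type*} [Field k] [CommRing B] [Algebra k B]
    [CommRing A] [Algebra k A]
    (𝒜 : ℤ → Submodule k B) (ℬ : ℤ → Submodule k A)
    (φ : B →ₐ[k] A) (x : A) (d : ℕ) : Prop where
  map_mem : ∀ (j : ℤ) (b : B), b ∈ 𝒜 j → φ b ∈ ℬ j
  x_mem : x ∈ ℬ 1
  x_pow : x ^ d = 0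
  decomp_mem : ∀ (j : ℤ) (f : Fin d → B), (∀ q : Fin d, f q ∈ 𝒜 (j - ((q : ℕ) : ℤ))) →
    (∑ q : Fin d, x ^ (q : ℕ) * φ (f q)) ∈ ℬ j
  decomp_exists : ∀ (j : ℤ), ∀ c ∈ ℬ j, ∃ f : Fin d → B,
    (∀ q : Fin d, f q ∈ 𝒜 (j - ((q : ℕ) : ℤ))) ∧ c = ∑ q : Fin d, x ^ (q : ℕ) * φ (f q)
  decomp_unique : ∀ (j : ℤ) (f : Fin d → B), (∀ q : Fin d, f q ∈ 𝒜 (j - ((q : ℕ) : ℤ))) →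
    (∑ q : Fin d, x ^ (q : ℕ) * φ (f q)) = 0 → ∀ q : Fin d, f q = 0

/-- `A` (graded by `ℬ`) is the extension `B ⊗ₖ k[x₁,…,xₙ]/(x₁^{d₁},…,xₙ^{dₙ})` of `B`
(graded by `𝒜`). -/
structure IsMultiCIExtension {k B A : Type*} [Field k] [CommRing B] [Algebra k B]
    [CommRing A] [Algebra k A] {n : ℕ}
    (𝒜 : ℤ → Submodule k B) (ℬ : ℤ → Submodule k A)
    (φ : B →ₐ[k] A) (x : Fin n → A) (dv : Fin n → ℕ) : Prop where
  map_mem : ∀ (j : ℤ) (b : B), b ∈ 𝒜 j → φ b ∈ ℬ j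
  x_mem : ∀ m : Fin n, x m ∈ ℬ 1
  x_pow : ∀ m : Fin n, x m ^ dv m = 0
  decomp_mem : ∀ (j : ℤ) (f : ((m : Fin n) → Fin (dv m)) → B),
    (∀ e, f e ∈ 𝒜 (j - ∑ m : Fin n, ((e m : ℕ) : ℤ))) →
    (∑ e : (m : Fin n) → Fin (dv m), (∏ m : Fin n, x m ^ ((e m : ℕ))) * φ (f e)) ∈ ℬ j
  decomp_exists : ∀ (j : ℤ), ∀ c ∈ ℬ j, ∃ f : ((m : Fin n) → Fin (dv m)) → B,
    (∀ e, f e ∈ 𝒜 (j - ∑ m : Fin n, ((e m : ℕ) : ℤ))) ∧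
    c = ∑ e : (m : Fin n) → Fin (dv m), (∏ m : Fin n, x m ^ ((e m : ℕ))) * φ (f e)
  decomp_unique : ∀ (j : ℤ) (f : ((m : Fin n) → Fin (dv m)) → B),
    (∀ e, f e ∈ 𝒜 (j - ∑ m : Fin n, ((e m : ℕ) : ℤ))) →
    (∑ e : (m : Fin n) → Fin (dv m), (∏ m : Fin n, x m ^ ((e m : ℕ))) * φ (f e)) = 0 →
    ∀ e, f e = 0

/-- The weak Lefschetz property. -/
def HasWLP {k R : Type*} [Field k] [CommRing R] [Algebra k R]
    (𝒜 : ℤ → Submodule k R) : Prop :=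
  ∃ ℓ ∈ 𝒜 1, ∀ i : ℤ, 0 ≤ i → MulFullRank (𝒜 i) (𝒜 (i + 1)) ℓ

/-- The strong Lefschetz property. -/
def HasSLP {k R : Type*} [Field k] [CommRing R] [Algebra k R]
    (𝒜 : ℤ → Submodule k R) : Prop :=
  ∃ ℓ ∈ 𝒜 1, ∀ i : ℤ, 0 ≤ i → ∀ t : ℕ, 1 ≤ t → MulFullRank (𝒜 i) (𝒜 (i + t)) (ℓ ^ t)

/-- The Hilbert function of the graded algebra. -/
noncomputable def hilb {k R : Type*} [Field k] [CommRing R] [Algebra k R]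
    (𝒜 : ℤ → Submodule k R) (i : ℤ) : ℕ :=
  Module.finrank k (𝒜 i)

/-- The algebra is almost centered. -/
def AlmostCentered {k R : Type*} [Field k] [CommRing R] [Algebra k R]
    (𝒜 : ℤ → Submodule k R) : Prop :=
  ∀ i j : ℤ, i < j →
    (hilb 𝒜 i < hilb 𝒜 j → ∀ s : ℕ, hilb 𝒜 (i - s) ≤ hilb 𝒜 (j + s)) ∧
    (hilb 𝒜 j < hilb 𝒜 i → ∀ s : ℕ, hilb 𝒜 (j + s) ≤ hilb 𝒜 (i - s))

/-- `binomZ t j` is the binomial coefficient `t` choose `j` for an integer `j`,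
equal to `0` for `j < 0` or `j > t`. -/
def binomZ (t : ℕ) (j : ℤ) : ℤ := if 0 ≤ j then (t.choose j.toNat : ℤ) else 0

/-- The `(d-p) × (d-p)` integer matrix `C_{t,p,d}` whose `(r,c)` entry (with `1 ≤ r,c ≤ d-p`)
is `binom(t, d+1-r-c)`. -/
def Cmat (t p d : ℕ) : Matrix (Fin (d - p)) (Fin (d - p)) ℤ :=
  Matrix.of fun r c => binomZ t ((d : ℤ) - 1 - (r : ℕ) - (c : ℕ))

/-- The characteristic of `k` is zero, or a prime not dividing the integer `N`. -/
def CharCond (k : Type*) [Field k] (N : ℤ) : Prop :=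
  CharZero k ∨ ∃ p : ℕ, p.Prime ∧ CharP k p ∧ ¬ ((p : ℤ) ∣ N)

section MulPowBlock

variable {R V₀ V₁ W₀ W₁ : Type*} [CommRing R] [AddCommGroup V₀] [Module R V₀]
  [AddCommGroup V₁] [Module R V₁] [AddCommGroup W₀] [Module R W₀] [AddCommGroup W₁] [Module R W₁]

/-- Multiplication by `(ℓ̄ + x) ^ t = ℓ̄ ^ t + t x ℓ̄ ^ (t - 1)` from `B_i ⊕ x B_{i-1}` to
`B_{i+t} ⊕ x B_{i+t-1}`, written with `N = ℓ̄ ^ (t - 1) : B_i → B_{i+t-1}`,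
`P = ℓ̄ : B_{i-1} → B_i`, `L = ℓ̄ : B_{i+t-1} → B_{i+t}` and `c = t`. -/
def mulPowBlock (N : V₀ →ₗ[R] W₁) (P : V₁ →ₗ[R] V₀) (L : W₁ →ₗ[R] W₀) (c : R) :
    V₀ × V₁ →ₗ[R] W₀ × W₁ :=
  (L ∘ₗ N ∘ₗ LinearMap.fst R V₀ V₁).prod
    (c • N ∘ₗ LinearMap.fst R V₀ V₁ + N ∘ₗ P ∘ₗ LinearMap.snd R V₀ V₁)

variable (N : V₀ →ₗ[R] W₁) (P : V₁ →ₗ[R] V₀) (L : W₁ →ₗ[R] W₀) {c : R}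

@[simp]
theorem mulPowBlock_apply (c : R) (v : V₀ × V₁) :
    mulPowBlock N P L c v = (L (N v.1), c • N v.1 + N (P v.2)) :=
  rfl

theorem injective_mulPowBlock_iff (hc : IsUnit c) :
    Function.Injective (mulPowBlock N P L c) ↔
      Function.Injective N ∧ Function.Injective (L ∘ₗ N ∘ₗ P) := by
  simp only [injective_iff_map_eq_zero]
  refine ⟨fun hT => ⟨fun v hv => ?_, fun v hv => ?_⟩, fun ⟨hN, hLNP⟩ v hv => ?_⟩
  · simpa using hT (v, 0) (by simp [hv])
  · have hLNPv : L (N (P v)) = 0 := hv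
    simpa [hc.smul_eq_zero] using congrArg Prod.snd (hT (P v, -(c • v)) (by simp [hLNPv]))
  · obtain ⟨h₀, h₁⟩ := Prod.ext_iff.1 hv
    simp only [mulPowBlock_apply, Prod.fst_zero, Prod.snd_zero] at h₀ h₁
    have h₂ : v.2 = 0 := hLNP _ <| by simpa [h₀] using congrArg L h₁
    have h₃ : v.1 = 0 := hN _ <| by simpa [h₂, hc.smul_eq_zero] using h₁
    exact Prod.ext h₃ h₂

theorem surjective_mulPowBlock_iff (hc : IsUnit c) :
    Function.Surjective (mulPowBlock N P L c) ↔
      Function.Surjective N ∧ Function.Surjective (L ∘ₗ N ∘ₗ P) := by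
  obtain ⟨d, hd⟩ := hc.exists_left_inv
  have hd' : c * d = 1 := by rw [mul_comm, hd]
  refine ⟨fun hT => ⟨fun w => ?_, fun w => ?_⟩, fun ⟨hN, hLNP⟩ w => ?_⟩
  · obtain ⟨v, hv⟩ := hT (0, w)
    exact ⟨c • v.1 + P v.2, by simpa using congrArg Prod.snd hv⟩
  · obtain ⟨v, hv⟩ := hT (w, 0)
    obtain ⟨h₀, h₁⟩ := Prod.ext_iff.1 hv
    simp only [mulPowBlock_apply] at h₀ h₁
    refine ⟨-(d • v.2), ?_⟩
    simp [eq_neg_of_add_eq_zero_right h₁, smul_smul, hd, ← h₀]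
  · obtain ⟨b, hb⟩ := hN (d • w.2)
    obtain ⟨b', hb'⟩ := hLNP (w.1 - L (N b))
    refine ⟨(b + P b', -(c • b')), ?_⟩
    simp only [LinearMap.coe_comp, Function.comp_apply] at hb'
    ext
    · simp [hb']
    · simp [hb, smul_smul, hd']

theorem toMatrix_mulPowBlock {ι₀ ι₁ κ₀ κ₁ : Type*} [Fintype ι₀] [Fintype ι₁] [Fintype κ₀]
    [Fintype κ₁] [DecidableEq ι₀] [DecidableEq ι₁] [DecidableEq κ₁]
    (b₀ : Module.Basis ι₀ R V₀) (b₁ : Module.Basis ι₁ R V₁) (d₀ : Module.Basis κ₀ R W₀)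
    (d₁ : Module.Basis κ₁ R W₁) (c : R) :
    LinearMap.toMatrix (b₀.prod b₁) (d₀.prod d₁) (mulPowBlock N P L c) =
      Matrix.fromBlocks (LinearMap.toMatrix d₁ d₀ L * LinearMap.toMatrix b₀ d₁ N) 0
        (c • LinearMap.toMatrix b₀ d₁ N)
        (LinearMap.toMatrix b₀ d₁ N * LinearMap.toMatrix b₁ b₀ P) := by
  rw [← LinearMap.toMatrix_comp, ← LinearMap.toMatrix_comp, ← map_smul]
  ext (r | r) (j | j) <;> simp [LinearMap.toMatrix_apply]

end MulPowBlock

theorem val_finRotate_pow_apply {n : ℕ} [NeZero n] (q : ℕ) (i : Fin n) :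
    ((finRotate n ^ q) i : ℕ) = (i + q) % n := by
  induction q with
  | zero => simp [Nat.mod_eq_of_lt i.isLt]
  | succ q ih =>
    rw [pow_succ', Equiv.Perm.mul_apply, finRotate_apply, Fin.val_add, ih, Fin.val_one',
      ← Nat.add_mod, ← add_assoc]

theorem finCongr_trans_finAddFlip_eq_finRotate_pow (m n : ℕ) :
    ((finCongr (add_comm m n)).trans finAddFlip : Equiv.Perm (Fin (m + n))) =
      finRotate (m + n) ^ m := by
  rcases Nat.eq_zero_or_pos (m + n) with h | h
  · ext i; exact absurd i.isLt (by omega)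
  have : NeZero (m + n) := ⟨h.ne'⟩
  ext ⟨j, hj⟩
  rw [val_finRotate_pow_apply, Equiv.trans_apply, finCongr_apply_mk]
  rcases lt_or_ge j n with hjn | hjn
  · rw [finAddFlip_apply_mk_left hjn]
    dsimp only
    rw [Nat.mod_eq_of_lt (by omega), add_comm]
  · rw [finAddFlip_apply_mk_right hjn (by omega)]
    dsimp only
    rw [show j + m = j - n + (m + n) by omega, Nat.add_mod_right, Nat.mod_eq_of_lt (by omega)]

theorem sign_finCongr_trans_finAddFlip (m n : ℕ) :
    Equiv.Perm.sign ((finCongr (add_comm m n)).trans finAddFlip : Equiv.Perm (Fin (m + n))) =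
      (-1) ^ (m * n) := by
  rw [finCongr_trans_finAddFlip_eq_finRotate_pow, map_pow, sign_finRotate, ← pow_mul]
  rcases m with _ | m
  · simp
  rw [show (m + 1 + n - 1) * (m + 1) = (m + 1) * n + m * (m + 1) by
      rw [Nat.add_right_comm, Nat.add_sub_cancel]; ring,
    pow_add, (Nat.even_mul_succ_self m).neg_one_pow, mul_one]

theorem det_submatrix_fromBlocks_mul_smul_mul {K : Type*} [Field K] {m n : ℕ}
    (L : Matrix (Fin m) (Fin n) K) (N : Matrix (Fin n) (Fin n) K) (P : Matrix (Fin n) (Fin m) K)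
    {c : K} (hc : c ≠ 0) :
    ((Matrix.fromBlocks (L * N) 0 (c • N) (N * P)).submatrix
        (finSumFinEquiv.symm : Fin (m + n) → Fin m ⊕ Fin n)
        (fun j : Fin (m + n) =>
          (finSumFinEquiv.symm (finCongr (add_comm m n) j) : Fin n ⊕ Fin m))).det =
      (-1) ^ (m * (n + 1)) * N.det * (L * N * P).det * c ^ ((n : ℤ) - m) := by
  set M := Matrix.fromBlocks (0 : Matrix (Fin m) (Fin m) K) (L * N) (N * P) (c • N)
  have hM : M = Matrix.fromBlocks 1 (c⁻¹ • L) 0 1 *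
      Matrix.fromBlocks (-c⁻¹ • (L * N * P)) 0 (N * P) (c • N) := by
    simp [M, Matrix.fromBlocks_multiply, Matrix.mul_assoc, smul_smul, mul_inv_cancel₀ hc]
  have hdetM : M.det = (-c⁻¹) ^ m * (L * N * P).det * (c ^ n * N.det) := by
    rw [hM, Matrix.det_mul, Matrix.det_fromBlocks_zero₂₁, Matrix.det_fromBlocks_zero₁₂,
      Matrix.det_smul, Matrix.det_smul]
    simp
  have hswap : ∀ a b, M a (Equiv.sumComm _ _ b) =
      Matrix.fromBlocks (L * N) 0 (c • N) (N * P) a b := by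
    rintro (a | a) (b | b) <;> rfl
  have hsub : (Matrix.fromBlocks (L * N) 0 (c • N) (N * P)).submatrix
      (finSumFinEquiv.symm : Fin (m + n) → Fin m ⊕ Fin n)
      (fun j : Fin (m + n) => (finSumFinEquiv.symm (finCongr (add_comm m n) j) : Fin n ⊕ Fin m)) =
      (M.submatrix finSumFinEquiv.symm finSumFinEquiv.symm).submatrix id
        ((finCongr (add_comm m n)).trans finAddFlip) := by
    ext i j
    simp [finAddFlip, ← hswap]
  rw [hsub, Matrix.det_permute', Matrix.det_submatrix_equiv_self, hdetM,
    sign_finCongr_trans_finAddFlip, zpow_sub₀ hc, zpow_natCast, zpow_natCast, neg_pow c⁻¹,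
    inv_pow]
  push_cast
  field_simp
  ring

section Conjugation

variable {k R V' W' : Type*} [Field k] [CommRing R] [Algebra k R] {V W : Submodule k R} {a : R}
  [AddCommGroup V'] [Module k V'] [AddCommGroup W'] [Module k W']
  (e : V' ≃ₗ[k] V) (e' : W' ≃ₗ[k] W) {f : V' →ₗ[k] W'}

theorem mulInjOn_iff_injective (h : ∀ v, (e' (f v) : R) = a * e v) :
    MulInjOn V a ↔ Function.Injective f := by
  rw [injective_iff_map_eq_zero]
  refine ⟨fun ha v hv => e.injective ?_, fun hf u hu hau => ?_⟩
  · simpa using ha _ (e v).2 (by rw [← h, hv, map_zero, Submodule.coe_zero])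
  · obtain ⟨v, hv⟩ := e.surjective ⟨u, hu⟩
    have hv' : (e v : R) = u := congrArg Subtype.val hv
    rw [← hv', hf v (e'.injective (Subtype.ext (by simp [h, hv', hau]))), map_zero,
      Submodule.coe_zero]

theorem mulSurjOnto_iff_surjective (h : ∀ v, (e' (f v) : R) = a * e v) :
    MulSurjOnto V W a ↔ Function.Surjective f := by
  refine ⟨fun ha w => ?_, fun hf w hw => ?_⟩
  · obtain ⟨u, hu, hau⟩ := ha _ (e' w).2
    obtain ⟨v, hv⟩ := e.surjective ⟨u, hu⟩
    refine ⟨v, e'.injective (Subtype.ext ?_)⟩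
    rw [h, hv, hau]
  · obtain ⟨v, hv⟩ := hf (e'.symm ⟨w, hw⟩)
    exact ⟨e v, (e v).2, by rw [← h, hv, LinearEquiv.apply_symm_apply]⟩

theorem toMatrix_eq_of_mul_eq_sum {ι κ : Type*} [Fintype ι] [Fintype κ] [DecidableEq ι]
    (bV : Module.Basis ι k V') (bW : Module.Basis κ k W') (M : Matrix κ ι k)
    (h : ∀ v, (e' (f v) : R) = a * e v)
    (hM : ∀ j, a * (e (bV j) : R) = ∑ r, M r j • (e' (bW r) : R)) :
    LinearMap.toMatrix bV bW f = M := by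
  rw [← LinearMap.toMatrix_toLin bV bW M]
  congr 1
  refine bV.ext fun j => e'.injective (Subtype.ext ?_)
  rw [h, hM, Matrix.toLin_self, map_sum, Submodule.coe_sum]
  simp

end Conjugation

theorem add_pow_succ_of_sq_eq_zero {A : Type*} [CommRing A] {x : A} (hx : x ^ 2 = 0) (a : A)
    (s : ℕ) : (a + x) ^ (s + 1) = a ^ (s + 1) + (s + 1) * x * a ^ s := by
  induction s with
  | zero => ring
  | succ s ih =>
    rw [pow_succ, ih]
    push_cast
    linear_combination ((s : A) + 1) * a ^ s * hx

namespace IsStdGradedArtinian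

variable {k B : Type*} [Field k] [CommRing B] [Algebra k B] {𝒜 : ℤ → Submodule k B}
  (hB : IsStdGradedArtinian k B 𝒜) {ℓ : B} (hℓ : ℓ ∈ 𝒜 1)
include hB hℓ

theorem pow_mul_mem {j j' : ℤ} {b : B} (hb : b ∈ 𝒜 j) (s : ℕ) (h : j + s = j') :
    ℓ ^ s * b ∈ 𝒜 j' := by
  subst h
  induction s with
  | zero => simpa using hb
  | succ s ih =>
    rw [pow_succ', mul_assoc]
    convert hB.mul_mem hℓ ih using 2
    push_cast; ring

noncomputable def mulPow (s : ℕ) {j j' : ℤ} (h : j + s = j') : 𝒜 j →ₗ[k] 𝒜 j' :=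
  (LinearMap.mulLeft k (ℓ ^ s)).restrict fun _ hv => hB.pow_mul_mem hℓ hv s h

@[simp]
theorem coe_mulPow_apply (s : ℕ) {j j' : ℤ} (h : j + s = j') (v : 𝒜 j) :
    (hB.mulPow hℓ s h v : B) = ℓ ^ s * v :=
  rfl

end IsStdGradedArtinian

namespace IsCIExtension

variable {k B A : Type*} [Field k] [CommRing B] [Algebra k B] [CommRing A] [Algebra k A]
  {𝒜 : ℤ → Submodule k B} {ℬ : ℤ → Submodule k A} {φ : B →ₐ[k] A} {x : A}
  (hext : IsCIExtension 𝒜 ℬ φ x 2)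
include hext

theorem add_x_mul_mem {j : ℤ} {b₀ b₁ : B} (h₀ : b₀ ∈ 𝒜 j) (h₁ : b₁ ∈ 𝒜 (j - 1)) :
    φ b₀ + x * φ b₁ ∈ ℬ j := by
  simpa using hext.decomp_mem j ![b₀, b₁] (by simp [Fin.forall_fin_two, h₀, h₁])

theorem eq_zero_of_add_x_mul_eq_zero {j : ℤ} {b₀ b₁ : B} (h₀ : b₀ ∈ 𝒜 j)
    (h₁ : b₁ ∈ 𝒜 (j - 1)) (h : φ b₀ + x * φ b₁ = 0) : b₀ = 0 ∧ b₁ = 0 := by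
  have := hext.decomp_unique j ![b₀, b₁] (by simp [Fin.forall_fin_two, h₀, h₁]) (by simpa using h)
  exact ⟨this 0, this 1⟩

theorem exists_eq_add_x_mul {j : ℤ} {c : A} (hc : c ∈ ℬ j) :
    ∃ b₀ ∈ 𝒜 j, ∃ b₁ ∈ 𝒜 (j - 1), c = φ b₀ + x * φ b₁ := by
  obtain ⟨f, hf, rfl⟩ := hext.decomp_exists j c hc
  exact ⟨f 0, by simpa using hf 0, f 1, by simpa using hf 1, by simp⟩

noncomputable def decompEquiv (j : ℤ) : (𝒜 j × 𝒜 (j - 1)) ≃ₗ[k] ℬ j :=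
  LinearEquiv.ofBijective
    (LinearMap.codRestrict (ℬ j)
      (φ.toLinearMap ∘ₗ (𝒜 j).subtype ∘ₗ LinearMap.fst k _ _ +
        LinearMap.mulLeft k x ∘ₗ φ.toLinearMap ∘ₗ (𝒜 (j - 1)).subtype ∘ₗ LinearMap.snd k _ _)
      fun v => hext.add_x_mul_mem v.1.2 v.2.2)
    ⟨(injective_iff_map_eq_zero _).2 fun v hv => by
      obtain ⟨h₀, h₁⟩ := hext.eq_zero_of_add_x_mul_eq_zero v.1.2 v.2.2 (congrArg Subtype.val hv)
      exact Prod.ext (Subtype.ext h₀) (Subtype.ext h₁),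
    fun c => by
      obtain ⟨b₀, h₀, b₁, h₁, hc⟩ := hext.exists_eq_add_x_mul c.2
      exact ⟨(⟨b₀, h₀⟩, ⟨b₁, h₁⟩), Subtype.ext hc.symm⟩⟩

theorem coe_decompEquiv_apply {j : ℤ} (v : 𝒜 j × 𝒜 (j - 1)) :
    (hext.decompEquiv j v : A) = φ v.1 + x * φ v.2 :=
  rfl

theorem decompEquiv_mulPowBlock {ℓ : B} {j j' : ℤ} {t : ℕ} (ht : 1 ≤ t)
    {N : 𝒜 j →ₗ[k] 𝒜 (j' - 1)} {P : 𝒜 (j - 1) →ₗ[k] 𝒜 j} {L : 𝒜 (j' - 1) →ₗ[k] 𝒜 j'}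
    (hN : ∀ v, (N v : B) = ℓ ^ (t - 1) * v) (hP : ∀ v, (P v : B) = ℓ * v)
    (hL : ∀ v, (L v : B) = ℓ * v) (v : 𝒜 j × 𝒜 (j - 1)) :
    (hext.decompEquiv j' (mulPowBlock N P L (t : k) v) : A) =
      (φ ℓ + x) ^ t * hext.decompEquiv j v := by
  obtain ⟨s, rfl⟩ := Nat.exists_eq_add_of_le' ht
  simp only [coe_decompEquiv_apply, mulPowBlock_apply, Submodule.coe_add, Submodule.coe_smul,
    hN, hP, hL, map_add, map_mul, map_pow, Algebra.smul_def, map_natCast,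
    add_pow_succ_of_sq_eq_zero hext.x_pow, Nat.add_sub_cancel]
  push_cast
  linear_combination -((s : A) + 1) * φ ℓ ^ s * φ v.2 * hext.x_pow

end IsCIExtension

/-- Let `A = B ⊗ₖ k[x]/(x²)`, `ℓ̄ ∈ B₁` a linear form, `ℓ = ℓ̄ + x`.
Fix `i, t ≥ 1`, assume `B_{i+t} ≠ 0` and `t` invertible in `k`.  Then
`·ℓ^t : A_i → A_{i+t}` has full rank iff `·ℓ̄^{t-1} : B_i → B_{i+t-1}` and
`·ℓ̄^{t+1} : B_{i-1} → B_{i+t}` have full rank for the same reason; and if the matrices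
`M̄_i^{t-1}`, `M̄_{i-1}^{t+1}` of these maps are square of sizes `n`, `m`, then the matrix
`M_i^t` of `·ℓ^t` (w.r.t. the concatenated bases) is square of size `n + m` and
`det M_i^t = (-1)^{m(n+1)} · det M̄_i^{t-1} · det M̄_{i-1}^{t+1} · t^{n-m}`. -/
theorem statement_1 {k B A : Type} [Field k]
    [CommRing B] [Algebra k B] [CommRing A] [Algebra k A]
    (𝒜 : ℤ → Submodule k B) (ℬ : ℤ → Submodule k A)
    (hB : IsStdGradedArtinian k B 𝒜)
    (φ : B →ₐ[k] A) (x : A) (hext : IsCIExtension 𝒜 ℬ φ x 2)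
    (ℓbar : B) (hℓbar : ℓbar ∈ 𝒜 1)
    (i t : ℕ) (ht : 1 ≤ t)
    (htinv : (t : k) ≠ 0) :
    (MulFullRank (ℬ (i : ℤ)) (ℬ ((i : ℤ) + t)) ((φ ℓbar + x) ^ t) ↔
      ((MulInjOn (𝒜 (i : ℤ)) (ℓbar ^ (t - 1)) ∧
          MulInjOn (𝒜 ((i : ℤ) - 1)) (ℓbar ^ (t + 1))) ∨
       (MulSurjOnto (𝒜 (i : ℤ)) (𝒜 ((i : ℤ) + t - 1)) (ℓbar ^ (t - 1)) ∧
          MulSurjOnto (𝒜 ((i : ℤ) - 1)) (𝒜 ((i : ℤ) + t)) (ℓbar ^ (t + 1)))))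
    ∧
    (∀ (n m : ℕ)
      (b1 : Module.Basis (Fin n) k (𝒜 (i : ℤ))) (b2 : Module.Basis (Fin n) k (𝒜 ((i : ℤ) + t - 1)))
      (b3 : Module.Basis (Fin m) k (𝒜 ((i : ℤ) - 1))) (b4 : Module.Basis (Fin m) k (𝒜 ((i : ℤ) + t)))
      (M : Matrix (Fin m ⊕ Fin n) (Fin n ⊕ Fin m) k)
      (N1 : Matrix (Fin n) (Fin n) k) (N2 : Matrix (Fin m) (Fin m) k),
      (∀ c : Fin n, (φ ℓbar + x) ^ t * φ (b1 c : B) =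
          (∑ r : Fin m, M (Sum.inl r) (Sum.inl c) • φ (b4 r : B)) +
          ∑ r : Fin n, M (Sum.inr r) (Sum.inl c) • (x * φ (b2 r : B))) →
      (∀ c : Fin m, (φ ℓbar + x) ^ t * (x * φ (b3 c : B)) =
          (∑ r : Fin m, M (Sum.inl r) (Sum.inr c) • φ (b4 r : B)) +
          ∑ r : Fin n, M (Sum.inr r) (Sum.inr c) • (x * φ (b2 r : B))) →
      (∀ c : Fin n, ℓbar ^ (t - 1) * (b1 c : B) = ∑ r : Fin n, N1 r c • (b2 r : B)) →
      (∀ c : Fin m, ℓbar ^ (t + 1) * (b3 c : B) = ∑ r : Fin m, N2 r c • (b4 r : B)) →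
      (M.submatrix (finSumFinEquiv.symm : Fin (m + n) → Fin m ⊕ Fin n)
          (fun j : Fin (m + n) =>
            (finSumFinEquiv.symm (finCongr (by omega : m + n = n + m) j) : Fin n ⊕ Fin m))).det
        = (-1 : k) ^ (m * (n + 1)) * N1.det * N2.det * (t : k) ^ ((n : ℤ) - (m : ℤ))) := by
  let N := hB.mulPow hℓbar (t - 1) (j := i) (j' := i + t - 1) (by push_cast [ht]; ring)
  let P := hB.mulPow hℓbar 1 (j := i - 1) (j' := i) (by push_cast; ring)
  let L := hB.mulPow hℓbar 1 (j := i + t - 1) (j' := i + t) (by push_cast; ring)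
  have hT := hext.decompEquiv_mulPowBlock ht (N := N) (P := P) (L := L) (fun _ => rfl)
    (fun _ => by simp [P]) (fun _ => by simp [L])
  have hN : ∀ v, (LinearEquiv.refl k _ (N v)).val = ℓbar ^ (t - 1) * (LinearEquiv.refl k _ v).val :=
    fun _ => rfl
  have hLNP : ∀ v, (LinearEquiv.refl k _ ((L ∘ₗ N ∘ₗ P) v)).val =
      ℓbar ^ (t + 1) * (LinearEquiv.refl k _ v).val := fun v => by
    simp only [LinearEquiv.refl_apply, LinearMap.comp_apply, L, N, P,
      IsStdGradedArtinian.coe_mulPow_apply, pow_one]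
    rw [← mul_assoc, ← pow_succ', Nat.sub_add_cancel ht, ← mul_assoc, ← pow_succ]
  have hc : IsUnit (t : k) := htinv.isUnit
  refine ⟨?_, fun n m b1 b2 b3 b4 M N1 N2 hM1 hM2 hN1 hN2 => ?_⟩
  · rw [MulFullRank, mulInjOn_iff_injective _ _ hT, mulSurjOnto_iff_surjective _ _ hT,
      injective_mulPowBlock_iff _ _ _ hc, surjective_mulPowBlock_iff _ _ _ hc,
      mulInjOn_iff_injective _ _ hN, mulInjOn_iff_injective _ _ hLNP,
      mulSurjOnto_iff_surjective _ _ hN, mulSurjOnto_iff_surjective _ _ hLNP]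
  have hM := toMatrix_eq_of_mul_eq_sum _ _ (b1.prod b3) (b4.prod b2) M hT <| by
    rintro (c | c) <;> simp [Fintype.sum_sum_type, IsCIExtension.coe_decompEquiv_apply, hM1, hM2]
  have hN1' := toMatrix_eq_of_mul_eq_sum _ _ b1 b2 N1 hN (by simpa using hN1)
  have hN2' := toMatrix_eq_of_mul_eq_sum _ _ b3 b4 N2 hLNP (by simpa using hN2)
  rw [← hM, toMatrix_mulPowBlock, hN1', ← hN2', LinearMap.toMatrix_comp b3 b2 b4,
    LinearMap.toMatrix_comp b3 b1 b2, hN1', ← Matrix.mul_assoc]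
  exact det_submatrix_fromBlocks_mul_smul_mul _ _ _ htinv
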